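/- Let Λ be a hereditary artin algebra, T a rigid module, and B its Bongartz complement. Then the minimal right add(T)-approximation ρ_B: T_B → B is injective. -/

import Mathlib

/-- `X` is (isomorphic to) a direct summand of `M`. -/
def IsSummand (Λ : Type) [Ring Λ] (X M : Type) [AddCommGroup X] [Module Λ X]
    [AddCommGroup M] [Module Λ M] : Prop :=
  ∃ (i : X →ₗ[Λ] M) (p : M →ₗ[Λ] X), p ∘ₗ i = LinearMap.id

/-- `X` belongs to `add T`, the additive subcategory generated by the
indecomposable direct summands of `T`. -/
def InAdd (Λ : Type) [Ring Λ] (T X : Type) [AddCommGroup T] [Module Λ T]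
    [AddCommGroup X] [Module Λ X] : Prop :=
  ∃ n : ℕ, IsSummand Λ X (Fin n → T)

/-- `Ext¹_Λ(A, B) = 0`: every short exact sequence `0 → B → E → A → 0` splits. -/
def Ext1Zero (Λ : Type) [Ring Λ] (A B : Type) [AddCommGroup A] [Module Λ A]
    [AddCommGroup B] [Module Λ B] : Prop :=
  ∀ (E : Type) [AddCommGroup E] [Module Λ E] (i : B →ₗ[Λ] E) (p : E →ₗ[Λ] A),
    Function.Injective i → Function.Surjective p → LinearMap.ker p = LinearMap.range i →
    ∃ r : E →ₗ[Λ] B, r ∘ₗ i = LinearMap.id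

/-- An indecomposable module: nonzero, and admitting no nontrivial direct sum
decomposition. -/
def IsIndec (Λ : Type) [Ring Λ] (M : Type) [AddCommGroup M] [Module Λ M] : Prop :=
  (∃ m : M, m ≠ 0) ∧ ∀ N N' : Submodule Λ M, IsCompl N N' → N = ⊥ ∨ N' = ⊥

/-- A hereditary ring: submodules of projective modules are projective. -/
def IsHereditaryRing (Λ : Type) [Ring Λ] : Prop :=
  ∀ (M : Type) [AddCommGroup M] [Module Λ M], Module.Projective Λ M →
    ∀ N : Submodule Λ M, Module.Projective Λ N

/-- Two modules are coprime if they share no indecomposable direct summand. -/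
def CoprimeMod (Λ : Type) [Ring Λ] (A B : Type) [AddCommGroup A] [Module Λ A]
    [AddCommGroup B] [Module Λ B] : Prop :=
  ∀ (X : Type) [AddCommGroup X] [Module Λ X],
    IsIndec Λ X → IsSummand Λ X A → ¬ IsSummand Λ X B

/-!
Let `K = ker ρ`. Since `T''` lies in `add T` and `T` is rigid, Wakamatsu's lemma gives
`Ext¹(T, K) = 0`. The sequence `0 → Λ → E → T' → 0` with `Λ` projective and `T' ∈ add T` then gives
`Ext¹(E, K) = 0`, hence `Ext¹(B, K) = 0` as `B ∈ add E`, and, `Λ` being hereditary,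
`Ext¹(im ρ, K) = 0`. So `0 → K → T'' → im ρ → 0` splits; for a retraction `κ : T'' → K` the
endomorphism `1 - κ` of `T''` satisfies `ρ (1 - κ) = ρ` and kills `K`, and right minimality
forces `K = 0`.
-/

open LinearMap

namespace LinearMap

variable {Λ : Type} [Ring Λ] {C G A X : Type} [AddCommGroup C] [Module Λ C]
  [AddCommGroup G] [Module Λ G] [AddCommGroup A] [Module Λ A] [AddCommGroup X] [Module Λ X]

theorem exists_comp_eq_of_ker_le (q : G →ₗ[Λ] A) (hq : Function.Surjective q)
    (φ : G →ₗ[Λ] X) (h : ker q ≤ ker φ) : ∃ β : A →ₗ[Λ] X, β ∘ₗ q = φ :=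
  ⟨(ker q).liftQ φ h ∘ₗ (q.quotKerEquivOfSurjective hq).symm.toLinearMap, by ext g; simp⟩

theorem exists_comp_eq_of_range_le (j : C →ₗ[Λ] G) (hj : Function.Injective j)
    (φ : X →ₗ[Λ] G) (h : range φ ≤ range j) : ∃ f : X →ₗ[Λ] C, j ∘ₗ f = φ :=
  ⟨(LinearEquiv.ofInjective j hj).symm.toLinearMap ∘ₗ
      φ.codRestrict (range j) fun x => h ⟨x, rfl⟩, by ext x; simp⟩

theorem injective_of_rightMinimal_of_ker_retract (ρ : G →ₗ[Λ] A)
    (hmin : ∀ θ : G →ₗ[Λ] G, ρ ∘ₗ θ = ρ → Function.Injective θ)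
    (κ : G →ₗ[Λ] ker ρ) (hκ : κ ∘ₗ (ker ρ).subtype = LinearMap.id) : Function.Injective ρ := by
  let θ := LinearMap.id - (ker ρ).subtype ∘ₗ κ
  have hρθ : ρ ∘ₗ θ = ρ := LinearMap.ext fun x => by simp [θ]
  rw [← ker_eq_bot, eq_bot_iff]
  intro x hx
  have hκx : κ x = ⟨x, hx⟩ := LinearMap.congr_fun hκ ⟨x, hx⟩
  exact hmin θ hρθ (by simp [θ, hκx] : θ x = θ 0)

end LinearMap

namespace Ext1Zero

variable {Λ : Type} [Ring Λ] {C C' G A A' : Type} [AddCommGroup C] [Module Λ C]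
  [AddCommGroup C'] [Module Λ C'] [AddCommGroup G] [Module Λ G]
  [AddCommGroup A] [Module Λ A] [AddCommGroup A'] [Module Λ A']

theorem exists_section (h : Ext1Zero Λ A C) (j : C →ₗ[Λ] G) (q : G →ₗ[Λ] A)
    (hj : Function.Injective j) (hq : Function.Surjective q) (hex : ker q = range j) :
    ∃ s : A →ₗ[Λ] G, q ∘ₗ s = LinearMap.id :=
  ((Function.Exact.split_tfae (exact_iff.mpr hex) hj hq).out 0 1).mpr (h G j q hj hq hex)

theorem of_exists_section
    (h : ∀ (G : Type) [AddCommGroup G] [Module Λ G] (j : C →ₗ[Λ] G) (q : G →ₗ[Λ] A),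
      Function.Injective j → Function.Surjective q → ker q = range j →
      ∃ s : A →ₗ[Λ] G, q ∘ₗ s = LinearMap.id) :
    Ext1Zero Λ A C := fun G _ _ j q hj hq hex =>
  ((Function.Exact.split_tfae (exact_iff.mpr hex) hj hq).out 0 1).mp (h G j q hj hq hex)

theorem exists_extension (h : Ext1Zero Λ A C) (j : C' →ₗ[Λ] G) (q : G →ₗ[Λ] A)
    (hj : Function.Injective j) (hq : Function.Surjective q) (hex : ker q = range j)
    (f : C' →ₗ[Λ] C) : ∃ g : G →ₗ[Λ] C, g ∘ₗ j = f := by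
  -- split the pushout of the sequence along `f`
  have hqj : ∀ x, q (j x) = 0 := fun x => hex.ge ⟨x, rfl⟩
  let N := range (f.prod (-j))
  have hN : N ≤ ker (q ∘ₗ snd Λ C G) := by
    rintro _ ⟨x, rfl⟩
    simp [hqj]
  have hmk : ∀ x, N.mkQ (0, j x) = N.mkQ (f x, 0) := fun x => by
    rw [Submodule.mkQ_apply, Submodule.mkQ_apply, Submodule.Quotient.eq]
    exact ⟨-x, by simp⟩
  have hι : Function.Injective (N.mkQ ∘ₗ inl Λ C G) := by
    intro c d hcd
    obtain ⟨x, hx⟩ := (Submodule.Quotient.eq N).mp hcd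
    obtain rfl : x = 0 := hj (by simpa using congrArg Prod.snd hx)
    simpa [sub_eq_zero, eq_comm] using congrArg Prod.fst hx
  have hκ : Function.Surjective (N.liftQ _ hN) := by
    intro a
    obtain ⟨g, rfl⟩ := hq a
    exact ⟨N.mkQ (0, g), by simp⟩
  have hexact : ker (N.liftQ _ hN) = range (N.mkQ ∘ₗ inl Λ C G) := by
    refine le_antisymm (fun y hy => ?_) ?_
    · obtain ⟨⟨c, g⟩, rfl⟩ := N.mkQ_surjective y
      obtain ⟨x, rfl⟩ : g ∈ range j := hex ▸ hy
      exact ⟨c + f x, (Submodule.Quotient.eq N).mpr ⟨x, by simp⟩⟩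
    · rintro _ ⟨c, rfl⟩
      simp
  obtain ⟨r, hr⟩ := h _ _ _ hι hκ hexact
  refine ⟨r ∘ₗ N.mkQ ∘ₗ inr Λ C G, LinearMap.ext fun x => ?_⟩
  simpa [hmk] using LinearMap.congr_fun hr (f x)

theorem exists_lift (h : Ext1Zero Λ A C) (j : C →ₗ[Λ] G) (q : G →ₗ[Λ] A')
    (hj : Function.Injective j) (hq : Function.Surjective q) (hex : ker q = range j)
    (u : A →ₗ[Λ] A') : ∃ σ : A →ₗ[Λ] G, q ∘ₗ σ = u := by
  -- split the pullback of the sequence along `u`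
  have hqj : ∀ x, q (j x) = 0 := fun x => hex.ge ⟨x, rfl⟩
  let P := ker (q ∘ₗ fst Λ G A - u ∘ₗ snd Λ G A)
  have hP : ∀ x : G × A, x ∈ P ↔ q x.1 = u x.2 := fun x => by simp [P, sub_eq_zero]
  let ι : C →ₗ[Λ] P := codRestrict P (j.prod 0) fun c => (hP _).mpr (by simp [hqj])
  let κ : P →ₗ[Λ] A := snd Λ G A ∘ₗ P.subtype
  have hι : Function.Injective ι := fun c d hcd => hj congr(($hcd : G × A).1)
  have hκ : Function.Surjective κ := by
    intro a
    obtain ⟨g, hg⟩ := hq (u a)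
    exact ⟨⟨(g, a), (hP _).mpr hg⟩, rfl⟩
  have hexact : ker κ = range ι := by
    refine le_antisymm ?_ ?_
    · rintro ⟨⟨g, a⟩, hga⟩ (rfl : a = 0)
      obtain ⟨c, rfl⟩ : g ∈ range j := hex ▸ by simpa using (hP _).mp hga
      exact ⟨c, rfl⟩
    · rintro _ ⟨c, rfl⟩
      rfl
  obtain ⟨s, hs⟩ := h.exists_section ι κ hι hκ hexact
  refine ⟨fst Λ G A ∘ₗ P.subtype ∘ₗ s, LinearMap.ext fun a => ?_⟩
  exact ((hP _).mp (s a).2).trans congr(u $(LinearMap.congr_fun hs a))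

theorem of_projective [Module.Projective Λ A] : Ext1Zero Λ A C :=
  of_exists_section fun _ _ _ _ q _ hq _ => Module.projective_lifting_property q LinearMap.id hq

variable {A₁ A₂ : Type} [AddCommGroup A₁] [Module Λ A₁] [AddCommGroup A₂] [Module Λ A₂] in
theorem of_exact (u : A₁ →ₗ[Λ] A) (v : A →ₗ[Λ] A₂) (hu : Function.Injective u)
    (hv : Function.Surjective v) (huv : ker v = range u)
    (h₁ : Ext1Zero Λ A₁ C) (h₂ : Ext1Zero Λ A₂ C) : Ext1Zero Λ A C := by
  intro G _ _ j q hj hq hex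
  have hqj : ∀ x, q (j x) = 0 := fun x => hex.ge ⟨x, rfl⟩
  have hvu : ∀ a, v (u a) = 0 := fun a => huv.ge ⟨a, rfl⟩
  obtain ⟨σ, hσ⟩ := h₁.exists_lift j q hj hq hex u
  have hσ' : ∀ a, q (σ a) = u a := LinearMap.congr_fun hσ
  -- `0 → C × A₁ → G → A₂ → 0`, to which `h₂` applies
  have hinj : Function.Injective (j.coprod σ) := by
    rw [← ker_eq_bot, eq_bot_iff]
    rintro ⟨c, a⟩ (hca : j c + σ a = 0)
    obtain rfl : a = 0 := hu (by simpa [hqj, hσ'] using congrArg q hca)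
    obtain rfl : c = 0 := hj (by simpa using hca)
    rfl
  have hexact : ker (v ∘ₗ q) = range (j.coprod σ) := by
    refine le_antisymm (fun g (hg : v (q g) = 0) => ?_) ?_
    · obtain ⟨a, ha⟩ : q g ∈ range u := huv ▸ hg
      obtain ⟨c, hc⟩ : g - σ a ∈ range j := hex ▸ by simp [hσ', ha]
      exact ⟨(c, a), by simp [hc]⟩
    · rintro _ ⟨⟨c, a⟩, rfl⟩
      simp [hqj, hσ', hvu]
  obtain ⟨r, hr⟩ := h₂.exists_extension _ _ hinj (hv.comp hq) hexact (fst Λ C A₁)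
  exact ⟨r, LinearMap.ext fun c => by simpa using LinearMap.congr_fun hr (c, 0)⟩

theorem pi_left {ι : Type} [Fintype ι] [DecidableEq ι] (h : Ext1Zero Λ A C) :
    Ext1Zero Λ (ι → A) C := by
  refine of_exists_section fun G _ _ j q hj hq hex => ?_
  choose σ hσ using fun i => h.exists_lift j q hj hq hex (LinearMap.single Λ (fun _ => A) i)
  refine ⟨∑ i, σ i ∘ₗ proj i, LinearMap.ext fun f => ?_⟩
  have hσ' : ∀ i a, q (σ i a) = Pi.single i a := fun i => LinearMap.congr_fun (hσ i)
  simpa [map_sum, hσ'] using Finset.univ_sum_single f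

theorem of_isSummand_left {X : Type} [AddCommGroup X] [Module Λ X] (h : Ext1Zero Λ A C)
    (hX : IsSummand Λ X A) : Ext1Zero Λ X C := by
  obtain ⟨i, p, hpi⟩ := hX
  refine of_exists_section fun G _ _ j q hj hq hex => ?_
  obtain ⟨σ, hσ⟩ := h.exists_lift j q hj hq hex p
  exact ⟨σ ∘ₗ i, by rw [← comp_assoc, hσ, hpi]⟩

theorem inAdd_left {X : Type} [AddCommGroup X] [Module Λ X] (h : Ext1Zero Λ A C)
    (hX : InAdd Λ A X) : Ext1Zero Λ X C :=
  let ⟨_, hX⟩ := hX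
  h.pi_left.of_isSummand_left hX

theorem pi_right {ι : Type} (h : Ext1Zero Λ A C) : Ext1Zero Λ A (ι → C) := by
  intro G _ _ j q hj hq hex
  choose r hr using fun i => h.exists_extension j q hj hq hex (proj i)
  exact ⟨LinearMap.pi r, LinearMap.ext fun f => funext fun i => LinearMap.congr_fun (hr i) f⟩

theorem of_isSummand_right {X : Type} [AddCommGroup X] [Module Λ X] (h : Ext1Zero Λ A C)
    (hX : IsSummand Λ X C) : Ext1Zero Λ A X := by
  obtain ⟨i, p, hpi⟩ := hX
  intro G _ _ j q hj hq hex
  obtain ⟨g, hg⟩ := h.exists_extension j q hj hq hex i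
  exact ⟨p ∘ₗ g, by rw [comp_assoc, hg, hpi]⟩

theorem inAdd_right {X : Type} [AddCommGroup X] [Module Λ X] (h : Ext1Zero Λ A C)
    (hX : InAdd Λ C X) : Ext1Zero Λ A X :=
  let ⟨_, hX⟩ := hX
  h.pi_right.of_isSummand_right hX

theorem submodule (hH : IsHereditaryRing Λ) (h : Ext1Zero Λ A C) (N : Submodule Λ A) :
    Ext1Zero Λ N C := by
  refine of_exists_section fun G _ _ j q hj hq hex => ?_
  -- `π` is a free cover of `A`; its restriction `π'` to `F = π⁻¹ N`, projective as `Λ` is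
  -- hereditary, maps onto `N` with the same kernel as `π`
  let π := Finsupp.linearCombination Λ (id : A → A)
  have hπ : Function.Surjective π := Finsupp.linearCombination_id_surjective Λ A
  let F := N.comap π
  have : Module.Projective Λ F := hH _ inferInstance F
  let π' : F →ₗ[Λ] N := π.restrict fun _ hx => hx
  have hπ' : Function.Surjective π' := fun n =>
    let ⟨f, hf⟩ := hπ n
    ⟨⟨f, by simp [F, hf]⟩, Subtype.ext hf⟩
  obtain ⟨l, hl⟩ := Module.projective_lifting_property q π' hq
  have hKF : ker π ≤ F := fun x (hx : π x = 0) => show π x ∈ N from hx ▸ N.zero_mem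
  obtain ⟨f, hf⟩ :=
      exists_comp_eq_of_range_le (X := ker π) j hj (l ∘ₗ Submodule.inclusion hKF) <| by
    rintro _ ⟨x, rfl⟩
    rw [← hex, mem_ker]
    exact (LinearMap.congr_fun hl _).trans (Subtype.ext (mem_ker.mp x.2))
  obtain ⟨g, hg⟩ := h.exists_extension (C' := ker π) _ π (ker π).injective_subtype hπ
    (ker π).range_subtype.symm f
  obtain ⟨s, hs⟩ := exists_comp_eq_of_ker_le (G := F) π' hπ' (l - j ∘ₗ g ∘ₗ F.subtype) <| by
    intro x hx
    have hx' : (x : A →₀ Λ) ∈ ker π :=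
      mem_ker.mpr (congrArg Subtype.val (mem_ker (f := π').mp hx))
    have hgx : g x = f ⟨x, hx'⟩ := LinearMap.congr_fun hg ⟨x, hx'⟩
    show l x - j (g x) = 0
    rw [hgx, sub_eq_zero]
    exact (LinearMap.congr_fun hf ⟨x, hx'⟩).symm
  refine ⟨s, (cancel_right hπ').mp ?_⟩
  rw [comp_assoc, hs, comp_sub, hl]
  have hqj : q ∘ₗ j = 0 := LinearMap.ext fun c => hex.ge ⟨c, rfl⟩
  rw [← comp_assoc _ j q, hqj, zero_comp, sub_zero, id_comp]

/-- Wakamatsu's lemma. -/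
theorem ker_of_rightApproximation (h : Ext1Zero Λ A C) (ρ : C →ₗ[Λ] A')
    (happrox : ∀ g : A →ₗ[Λ] A', ∃ t : A →ₗ[Λ] C, ρ ∘ₗ t = g) : Ext1Zero Λ A (ker ρ) := by
  intro G _ _ j q hj hq hex
  obtain ⟨α, hα⟩ := h.exists_extension j q hj hq hex (ker ρ).subtype
  obtain ⟨β, hβ⟩ := exists_comp_eq_of_ker_le q hq (ρ ∘ₗ α) <| by
    rw [hex]
    rintro _ ⟨k, rfl⟩
    simpa using congrArg ρ (LinearMap.congr_fun hα k)
  obtain ⟨t, ht⟩ := happrox β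
  have hθ : ∀ g, (α - t ∘ₗ q) g ∈ ker ρ := fun g => by
    simpa [sub_eq_zero] using (congr($ht (q g)).trans (LinearMap.congr_fun hβ g)).symm
  refine ⟨codRestrict _ (α - t ∘ₗ q) hθ, LinearMap.ext fun k => Subtype.ext ?_⟩
  have hqj : q (j k) = 0 := hex.ge ⟨k, rfl⟩
  simpa [hqj] using LinearMap.congr_fun hα k

end Ext1Zero

theorem min_right_approx_of_bongartz_injective_general (Λ : Type) [Ring Λ]
    (hH : IsHereditaryRing Λ)
    (T E T' B T'' : Type) [AddCommGroup T] [Module Λ T] [AddCommGroup E] [Module Λ E]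
    [AddCommGroup T'] [Module Λ T'] [AddCommGroup B] [Module Λ B]
    [AddCommGroup T''] [Module Λ T'']
    (hrigid : Ext1Zero Λ T T) (hT' : InAdd Λ T T')
    (i : Λ →ₗ[Λ] E) (p : E →ₗ[Λ] T')
    (hi : Function.Injective i) (hp : Function.Surjective p)
    (hexact : LinearMap.ker p = LinearMap.range i)
    (hB1 : InAdd Λ E B)
    (hT'' : InAdd Λ T T'') (ρ : T'' →ₗ[Λ] B)
    (happrox : ∀ g : T →ₗ[Λ] B, ∃ h : T →ₗ[Λ] T'', ρ ∘ₗ h = g)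
    (hmin : ∀ θ : T'' →ₗ[Λ] T'', ρ ∘ₗ θ = ρ → Function.Bijective θ) :
    Function.Injective ρ := by
  have hT : Ext1Zero Λ T (ker ρ) := (hrigid.inAdd_right hT'').ker_of_rightApproximation ρ happrox
  have hE : Ext1Zero Λ E (ker ρ) := .of_exact i p hi hp hexact .of_projective (hT.inAdd_left hT')
  have hI : Ext1Zero Λ (range ρ) (ker ρ) := (hE.inAdd_left hB1).submodule hH (range ρ)
  obtain ⟨κ, hκ⟩ := hI T'' (ker ρ).subtype ρ.rangeRestrict (ker ρ).injective_subtype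
    ρ.surjective_rangeRestrict (by rw [ker_rangeRestrict, Submodule.range_subtype])
  exact ρ.injective_of_rightMinimal_of_ker_retract (fun θ hθ => (hmin θ hθ).1) κ hκ

/-- The minimal right `add T`-approximation of the Bongartz complement `B`
of a rigid module `T` over a hereditary artin algebra is injective. -/
theorem min_right_approx_of_bongartz_injective (Λ : Type) [Ring Λ] [IsArtinianRing Λ]
    (hH : IsHereditaryRing Λ)
    (T E T' B T'' : Type) [AddCommGroup T] [Module Λ T] [AddCommGroup E] [Module Λ E]
    [AddCommGroup T'] [Module Λ T'] [AddCommGroup B] [Module Λ B]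
    [AddCommGroup T''] [Module Λ T'']
    (hTfl : IsFiniteLength Λ T)
    (hrigid : Ext1Zero Λ T T) (hT' : InAdd Λ T T')
    (i : Λ →ₗ[Λ] E) (p : E →ₗ[Λ] T')
    (hi : Function.Injective i) (hp : Function.Surjective p)
    (hexact : LinearMap.ker p = LinearMap.range i)
    (huniv : ∀ (F : Type) [AddCommGroup F] [Module Λ F] (j : Λ →ₗ[Λ] F) (q : F →ₗ[Λ] T),
      Function.Injective j → Function.Surjective q → LinearMap.ker q = LinearMap.range j →
      ∃ (h : T →ₗ[Λ] T') (φ : F →ₗ[Λ] E), φ ∘ₗ j = i ∧ p ∘ₗ φ = h ∘ₗ q)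
    (hB1 : InAdd Λ E B) (hB2 : InAdd Λ (T × B) E)
    (hcop : CoprimeMod Λ T B)
    (hT'' : InAdd Λ T T'') (ρ : T'' →ₗ[Λ] B)
    (happrox : ∀ g : T →ₗ[Λ] B, ∃ h : T →ₗ[Λ] T'', ρ ∘ₗ h = g)
    (hmin : ∀ θ : T'' →ₗ[Λ] T'', ρ ∘ₗ θ = ρ → Function.Bijective θ) :
    Function.Injective ρ :=
  min_right_approx_of_bongartz_injective_general Λ hH T E T' B T'' hrigid hT' i p hi hp hexact hB1
    hT'' ρ happrox hmin
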